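/- arXiv:2312.14905 — 2 statements merged into one kernel-verified Lean document; each statement's English description precedes it below -/
import Mathlib

section
/- Non-commutation of unlinkings with a repeated index: Let (C,x) be a quiver pair with m nodes and let i, j, k be pairwise distinct nodes. Let A = U(j,k)(U(i,j)(C,x)) and B = U(i,j)(U(j,k)(C,x)), both with m+2 nodes, and let τ be the transposition of {1,…,m+2} exchanging m+1 and m+2. Then A's variable at a equals B's variable at τ(a) for all a, and A's matrix at (a,b) equals B's matrix at (τ(a),τ(b)) for all unordered pairs {a,b} except {k,m+1} and {i,m+2}; precisely, A(k,m+1) = B(k,m+2) + 1 and A(i,m+2) = B(i,m+1) − 1 (together with the symmetric entries). Thus the two quivers differ by exactly one pair of arrows between the nodes (ij) and k on one side, and between i and (jk) on the other. -/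
namespace QuiverUnlink

/-- Unlinking of the distinct nodes `i` and `j`: the matrix part.
Nodes are indexed `0, …, m-1`; the newly created node has index `m`. -/
def unlinkC {m : ℕ} (C : Fin m → Fin m → ℤ) (i j : Fin m) :
    Fin (m + 1) → Fin (m + 1) → ℤ := fun a b =>
  if ha : (a : ℕ) < m then
    if hb : (b : ℕ) < m then
      if ((⟨a, ha⟩ : Fin m) = i ∧ (⟨b, hb⟩ : Fin m) = j) ∨
         ((⟨a, ha⟩ : Fin m) = j ∧ (⟨b, hb⟩ : Fin m) = i) then
        C i j - 1
      else C ⟨a, ha⟩ ⟨b, hb⟩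
    else
      if (⟨a, ha⟩ : Fin m) = i then C i i + C i j - 1
      else if (⟨a, ha⟩ : Fin m) = j then C j j + C i j - 1
      else C ⟨a, ha⟩ i + C ⟨a, ha⟩ j
  else
    if hb : (b : ℕ) < m then
      if (⟨b, hb⟩ : Fin m) = i then C i i + C i j - 1
      else if (⟨b, hb⟩ : Fin m) = j then C j j + C i j - 1
      else C ⟨b, hb⟩ i + C ⟨b, hb⟩ j
    else C i i + C j j + 2 * C i j - 1

/-- Unlinking of the distinct nodes `i` and `j`: the generating-parameters part. -/
def unlinkX {G : Type*} [CommGroup G] {m : ℕ} (q : G) (x : Fin m → G) (i j : Fin m) :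
    Fin (m + 1) → G := fun a =>
  if ha : (a : ℕ) < m then x ⟨a, ha⟩ else q⁻¹ * x i * x j

lemma unlinkC_cc {m : ℕ} (C : Fin m → Fin m → ℤ) (i j a b : Fin m) :
    unlinkC C i j a.castSucc b.castSucc =
      if (a = i ∧ b = j) ∨ (a = j ∧ b = i) then C i j - 1 else C a b := by
  simp [unlinkC, a.isLt, b.isLt]

lemma unlinkC_c_last {m : ℕ} (C : Fin m → Fin m → ℤ) (i j a : Fin m) :
    unlinkC C i j a.castSucc (Fin.last m) =
      if a = i then C i i + C i j - 1 else if a = j then C j j + C i j - 1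
      else C a i + C a j := by
  simp [unlinkC, a.isLt]

lemma unlinkC_last_c {m : ℕ} (C : Fin m → Fin m → ℤ) (i j b : Fin m) :
    unlinkC C i j (Fin.last m) b.castSucc =
      if b = i then C i i + C i j - 1 else if b = j then C j j + C i j - 1
      else C b i + C b j := by
  simp [unlinkC, b.isLt]

lemma unlinkC_last_last {m : ℕ} (C : Fin m → Fin m → ℤ) (i j : Fin m) :
    unlinkC C i j (Fin.last m) (Fin.last m) = C i i + C j j + 2 * C i j - 1 := by
  simp [unlinkC]

lemma unlinkX_c {G : Type*} [CommGroup G] {m : ℕ} (q : G) (x : Fin m → G) (i j a : Fin m) :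
    unlinkX q x i j a.castSucc = x a := by
  simp [unlinkX, a.isLt]

lemma unlinkX_last {G : Type*} [CommGroup G] {m : ℕ} (q : G) (x : Fin m → G) (i j : Fin m) :
    unlinkX q x i j (Fin.last m) = q⁻¹ * x i * x j := by
  simp [unlinkX]

/-- **Non-commutation of unlinkings with a repeated index.**
For pairwise distinct nodes `i, j, k`, the quiver pairs `A = U(j,k) (U(i,j) (C,x))` and
`B = U(i,j) (U(j,k) (C,x))` (each with `m+2` nodes) have, after relabeling by the transposition
`τ` of the two created nodes, equal variables and equal matrix entries except on the unordered
pairs `{k, (ij)}` and `{i, (jk)}`, where they differ by exactly one pair of arrows: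
`A(k,(ij)) = B(k,(ij)') + 1` and `A(i,(jk)) = B(i,(jk)') − 1`. -/
theorem noncommutation_repeated_index {G : Type*} [CommGroup G] (q : G) {m : ℕ}
    (C : Fin m → Fin m → ℤ) (hC : ∀ a b, C a b = C b a) (x : Fin m → G)
    (i j k : Fin m) (hij : i ≠ j) (hjk : j ≠ k) (hik : i ≠ k) :
    let A : Fin (m + 2) → Fin (m + 2) → ℤ :=
      unlinkC (unlinkC C i j) j.castSucc k.castSucc
    let Ax : Fin (m + 2) → G := unlinkX q (unlinkX q x i j) j.castSucc k.castSucc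
    let B : Fin (m + 2) → Fin (m + 2) → ℤ :=
      unlinkC (unlinkC C j k) i.castSucc j.castSucc
    let Bx : Fin (m + 2) → G := unlinkX q (unlinkX q x j k) i.castSucc j.castSucc
    let τ : Equiv.Perm (Fin (m + 2)) :=
      Equiv.swap ⟨m, by omega⟩ ⟨m + 1, by omega⟩
    let km : Fin (m + 2) := k.castSucc.castSucc
    let im : Fin (m + 2) := i.castSucc.castSucc
    let nm : Fin (m + 2) := ⟨m, by omega⟩
    let nm1 : Fin (m + 2) := ⟨m + 1, by omega⟩
    (∀ a, Ax a = Bx (τ a)) ∧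
    (∀ a b, ¬((a = km ∧ b = nm) ∨ (a = nm ∧ b = km) ∨
              (a = im ∧ b = nm1) ∨ (a = nm1 ∧ b = im)) →
      A a b = B (τ a) (τ b)) ∧
    A km nm = B km nm1 + 1 ∧ A nm km = B nm1 km + 1 ∧
    A im nm1 = B im nm - 1 ∧ A nm1 im = B nm im - 1 := by
  intro A Ax B Bx τ km im nm nm1
  have hnm : nm = (Fin.last m).castSucc := rfl
  have hnm1 : nm1 = Fin.last (m + 1) := rfl
  have hτ1 : τ ((Fin.last m).castSucc) = Fin.last (m + 1) := Equiv.swap_apply_left _ _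
  have hτ2 : τ (Fin.last (m + 1)) = (Fin.last m).castSucc := Equiv.swap_apply_right _ _
  have hτc : ∀ c : Fin m, τ c.castSucc.castSucc = c.castSucc.castSucc := by
    intro c
    refine Equiv.swap_apply_of_ne_of_ne ?_ ?_ <;>
      · have := c.isLt
        simp only [ne_eq, Fin.ext_iff, Fin.coe_castSucc]
        omega
  have hji : j ≠ i := Ne.symm hij
  have hkj : k ≠ j := Ne.symm hjk
  have hki : k ≠ i := Ne.symm hik
  have hli : Fin.last m ≠ i.castSucc := (Fin.castSucc_lt_last i).ne'
  have hlj : Fin.last m ≠ j.castSucc := (Fin.castSucc_lt_last j).ne'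
  have hlk : Fin.last m ≠ k.castSucc := (Fin.castSucc_lt_last k).ne'
  have hil : i.castSucc ≠ Fin.last m := (Fin.castSucc_lt_last i).ne
  have hjl : j.castSucc ≠ Fin.last m := (Fin.castSucc_lt_last j).ne
  have hkl : k.castSucc ≠ Fin.last m := (Fin.castSucc_lt_last k).ne
  refine ⟨?_, ?_, ?_, ?_, ?_, ?_⟩
  · -- variables
    intro a
    induction a using Fin.lastCases with
    | last =>
      rw [hτ2]
      simp only [Ax, Bx, unlinkX_last, unlinkX_c]
    | cast a =>
      induction a using Fin.lastCases with
      | last =>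
        rw [hτ1]
        simp only [Ax, Bx, unlinkX_last, unlinkX_c]
      | cast c =>
        rw [hτc]
        simp only [Ax, Bx, unlinkX_c]
  · -- generic entries
    intro a b
    induction a using Fin.lastCases with
    | last =>
      induction b using Fin.lastCases with
      | last =>
        intro _
        rw [hτ2]
        simp only [A, B, unlinkC_last_last, unlinkC_cc, Fin.castSucc_inj]
        simp_all
        try ring
      | cast b =>
        induction b using Fin.lastCases with
        | last =>
          intro _
          rw [hτ2, hτ1]
          simp only [A, B, unlinkC_last_c, unlinkC_c_last, unlinkC_cc, Fin.castSucc_inj]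
          simp only [hli, hlj, hlk, hil, hjl, hkl, hij, hji, hjk, hkj, hik, hki, ite_true,
            ite_false, if_true, if_false]
          rw [hC k i, hC k j]; ring
        | cast d =>
          intro h
          have hd : d ≠ i := by
            rintro rfl
            exact h (Or.inr (Or.inr (Or.inr ⟨rfl, rfl⟩)))
          rw [hτ2, hτc]
          simp only [A, B, unlinkC_last_c, unlinkC_cc, Fin.castSucc_inj]
          by_cases h1 : d = j <;> by_cases h2 : d = k <;>
            first
              | (simp_all <;> try ring)
              | ring
    | cast a =>
      induction a using Fin.lastCases with
      | last =>
        induction b using Fin.lastCases with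
        | last =>
          intro _
          rw [hτ1, hτ2]
          simp only [A, B, unlinkC_c_last, unlinkC_last_c, unlinkC_cc, Fin.castSucc_inj]
          simp only [hli, hlj, hlk, hil, hjl, hkl, hij, hji, hjk, hkj, hik, hki, ite_true,
            ite_false, if_true, if_false]
          rw [hC k i, hC k j]; ring
        | cast b =>
          induction b using Fin.lastCases with
          | last =>
            intro _
            rw [hτ1]
            simp only [A, B, unlinkC_last_last, unlinkC_cc, Fin.castSucc_inj]
            simp_all
            try ring
          | cast d =>
            intro h
            have hd : d ≠ k := by
              rintro rfl
              exact h (Or.inr (Or.inl ⟨rfl, rfl⟩))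
            rw [hτ1, hτc]
            simp only [A, B, unlinkC_cc, unlinkC_last_c, unlinkC_c_last, Fin.castSucc_inj]
            by_cases h1 : d = i <;> by_cases h2 : d = j <;>
              first
                | (simp_all <;> try ring)
                | ring
      | cast c =>
        induction b using Fin.lastCases with
        | last =>
          intro h
          have hc : c ≠ i := by
            rintro rfl
            exact h (Or.inr (Or.inr (Or.inl ⟨rfl, rfl⟩)))
          rw [hτc, hτ2]
          simp only [A, B, unlinkC_c_last, unlinkC_cc, Fin.castSucc_inj]
          by_cases h1 : c = j <;> by_cases h2 : c = k <;>
            first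
              | (simp_all <;> try ring)
              | ring
        | cast b =>
          induction b using Fin.lastCases with
          | last =>
            intro h
            have hc : c ≠ k := by
              rintro rfl
              exact h (Or.inl ⟨rfl, rfl⟩)
            rw [hτc, hτ1]
            simp only [A, B, unlinkC_cc, unlinkC_c_last, Fin.castSucc_inj]
            by_cases h1 : c = i <;> by_cases h2 : c = j <;>
              first
                | (simp_all <;> try ring)
                | ring
          | cast d =>
            intro _
            rw [hτc, hτc]
            simp only [A, B, unlinkC_cc, Fin.castSucc_inj]
            by_cases h1 : c = i <;> by_cases h2 : c = j <;> by_cases h3 : c = k <;>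
              by_cases h4 : d = i <;> by_cases h5 : d = j <;> by_cases h6 : d = k <;>
              first
                | (simp_all <;> try ring)
                | ring
  · -- A km nm = B km nm1 + 1
    rw [hnm, hnm1]
    simp only [A, B, km, unlinkC_cc, unlinkC_c_last, Fin.castSucc_inj]
    simp_all
    try ring
  · -- A nm km = B nm1 km + 1
    rw [hnm, hnm1]
    simp only [A, B, km, unlinkC_cc, unlinkC_last_c, Fin.castSucc_inj]
    simp_all
    try ring
  · -- A im nm1 = B im nm - 1
    rw [hnm, hnm1]
    simp only [A, B, im, unlinkC_cc, unlinkC_c_last, Fin.castSucc_inj]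
    simp_all
    try ring
  · -- A nm1 im = B nm im - 1
    rw [hnm, hnm1]
    simp only [A, B, im, unlinkC_cc, unlinkC_last_c, Fin.castSucc_inj]
    simp_all
    try ring

end QuiverUnlink
end

section
/- Deleting an untouched node commutes with unlinking (content of Lemma 6.2): Let (C,x) be a quiver pair with m nodes, let r ∈ {1,…,m}, and let S = ((a_1,b_1),…,(a_n,b_n)) be a sequence of unlinkings starting at m nodes such that a_t ≠ r and b_t ≠ r for every t. Let D_r(C,x) denote the quiver pair with m−1 nodes obtained by deleting row and column r of C and entry r of x (re-indexing each node above r downwards by one), and let S̃ be S with every index greater than r decreased by 1 (so S̃ is a sequence of unlinkings starting at m−1 nodes). Then applying S̃ to D_r(C,x) yields exactly the quiver pair obtained by deleting node r (with the same downward re-indexing of all nodes above r, including the n newly created nodes) from the result of applying S to (C,x). -/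
namespace QuiverUnlink

universe u

/-- A quiver pair: a symmetric integer matrix together with generating parameters in `G`,
on `m` nodes (indexed `0, …, m-1`). -/
structure QP (G : Type u) where
  m : ℕ
  C : Fin m → Fin m → ℤ
  x : Fin m → G

/-- Matrix entry of a quiver pair, read at natural-number indices (junk value `0` out of range). -/
def QP.Cn {G : Type u} (Q : QP G) (a b : ℕ) : ℤ :=
  if ha : a < Q.m then if hb : b < Q.m then Q.C ⟨a, ha⟩ ⟨b, hb⟩ else 0 else 0

/-- Generating parameter of a quiver pair, read at a natural-number index
(junk value `1` out of range). -/
def QP.xn {G : Type u} [CommGroup G] (Q : QP G) (a : ℕ) : G :=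
  if h : a < Q.m then Q.x ⟨a, h⟩ else 1

/-- One unlinking step `U(i,j)`, with nodes given by natural-number indices.
If the indices are not valid the quiver pair is returned unchanged (this case never
occurs under the validity hypotheses of the statements below). -/
def unlinkStep {G : Type u} [CommGroup G] (q : G) (i j : ℕ) (Q : QP G) : QP G :=
  if h : i < Q.m ∧ j < Q.m ∧ i ≠ j then
    { m := Q.m + 1
      C := unlinkC Q.C ⟨i, h.1⟩ ⟨j, h.2.1⟩
      x := unlinkX q Q.x ⟨i, h.1⟩ ⟨j, h.2.1⟩ }
  else Q

/-- Apply a sequence of unlinkings, leftmost entry first. -/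
def applySeq {G : Type u} [CommGroup G] (q : G) (S : List (ℕ × ℕ)) (Q : QP G) : QP G :=
  S.foldl (fun R e => unlinkStep q e.1 e.2 R) Q

/-- A sequence of unlinkings starting at `m` nodes: the entry at (0-based) position `t`
consists of two distinct node indices `< m + t` (the node created at step `t` has index `m + t`). -/
def ValidSeq (m : ℕ) (S : List (ℕ × ℕ)) : Prop :=
  ∀ t : Fin S.length,
    (S.get t).1 ≠ (S.get t).2 ∧ (S.get t).1 < m + (t : ℕ) ∧ (S.get t).2 < m + (t : ℕ)

/-- Two quiver pairs are permutation-equivalent rel the first `m` nodes. -/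
def PermEquivRel {G : Type u} (m : ℕ) (X Y : QP G) : Prop :=
  ∃ (h : X.m = Y.m) (π : Equiv.Perm (Fin Y.m)),
    (∀ a : Fin Y.m, (a : ℕ) < m → π a = a) ∧
    (∀ a b : Fin X.m, X.C a b = Y.C (π (Fin.cast h a)) (π (Fin.cast h b))) ∧
    (∀ a : Fin X.m, X.x a = Y.x (π (Fin.cast h a)))

/-- Two quiver pairs are permutation-equivalent. -/
def PermEquiv {G : Type u} (X Y : QP G) : Prop :=
  ∃ (h : X.m = Y.m) (π : Equiv.Perm (Fin Y.m)),
    (∀ a b : Fin X.m, X.C a b = Y.C (π (Fin.cast h a)) (π (Fin.cast h b))) ∧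
    (∀ a : Fin X.m, X.x a = Y.x (π (Fin.cast h a)))

/-- Delete node `r` from a quiver pair (every node above `r` is re-indexed downwards by one). -/
def QP.delete {G : Type u} [CommGroup G] (Q : QP G) (r : ℕ) : QP G where
  m := Q.m - 1
  C := fun a b =>
    Q.Cn (if (a : ℕ) < r then (a : ℕ) else (a : ℕ) + 1)
         (if (b : ℕ) < r then (b : ℕ) else (b : ℕ) + 1)
  x := fun a => Q.xn (if (a : ℕ) < r then (a : ℕ) else (a : ℕ) + 1)

/-- Decrease every index greater than `r` by one. -/
def decIdx (r e : ℕ) : ℕ := if r < e then e - 1 else e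


/-! ### Auxiliary machinery -/

/-- Nat-level description of the matrix after one unlinking. -/
def uC (f : ℕ → ℕ → ℤ) (m i j : ℕ) : ℕ → ℕ → ℤ := fun a b =>
  if a < m then
    if b < m then (if (a = i ∧ b = j) ∨ (a = j ∧ b = i) then f i j - 1 else f a b)
    else if b = m then
      (if a = i then f i i + f i j - 1 else if a = j then f j j + f i j - 1 else f a i + f a j)
    else 0
  else if a = m then
    (if b < m then
      (if b = i then f i i + f i j - 1 else if b = j then f j j + f i j - 1 else f b i + f b j)
     else if b = m then f i i + f j j + 2 * f i j - 1 else 0)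
  else 0

/-- Nat-level description of the parameters after one unlinking. -/
def uX {G : Type u} [CommGroup G] (q : G) (g : ℕ → G) (m i j : ℕ) : ℕ → G := fun a =>
  if a < m then g a else if a = m then q⁻¹ * g i * g j else 1

/-- Increase every index `≥ r` by one. -/
def liftIdx (r u : ℕ) : ℕ := if u < r then u else u + 1

theorem unlink_Cn {G : Type u} [CommGroup G] (q : G) (Q : QP G) {i j : ℕ}
    (hi : i < Q.m) (hj : j < Q.m) (hij : i ≠ j) (a b : ℕ) :
    (unlinkStep q i j Q).Cn a b = uC Q.Cn Q.m i j a b := by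
  rw [unlinkStep, dif_pos (⟨hi, hj, hij⟩ : i < Q.m ∧ j < Q.m ∧ i ≠ j)]
  unfold QP.Cn uC unlinkC
  dsimp only
  simp only [Fin.mk.injEq]
  split_ifs <;> first | rfl | omega | (congr <;> omega)

theorem unlink_xn {G : Type u} [CommGroup G] (q : G) (Q : QP G) {i j : ℕ}
    (hi : i < Q.m) (hj : j < Q.m) (hij : i ≠ j) (a : ℕ) :
    (unlinkStep q i j Q).xn a = uX q Q.xn Q.m i j a := by
  rw [unlinkStep, dif_pos (⟨hi, hj, hij⟩ : i < Q.m ∧ j < Q.m ∧ i ≠ j)]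
  unfold QP.xn uX unlinkX
  dsimp only
  split_ifs <;> first | rfl | omega | (congr <;> omega)

theorem unlink_m {G : Type u} [CommGroup G] (q : G) (Q : QP G) {i j : ℕ}
    (hi : i < Q.m) (hj : j < Q.m) (hij : i ≠ j) :
    (unlinkStep q i j Q).m = Q.m + 1 := by
  rw [unlinkStep, dif_pos (⟨hi, hj, hij⟩ : i < Q.m ∧ j < Q.m ∧ i ≠ j)]

theorem delete_m {G : Type u} [CommGroup G] (Q : QP G) (r : ℕ) :
    (Q.delete r).m = Q.m - 1 := rfl

theorem delete_Cn {G : Type u} [CommGroup G] (Q : QP G) (r : ℕ) (a b : ℕ) :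
    (Q.delete r).Cn a b =
      if a < Q.m - 1 ∧ b < Q.m - 1 then Q.Cn (liftIdx r a) (liftIdx r b) else 0 := by
  unfold QP.delete QP.Cn liftIdx
  dsimp only
  split_ifs <;> first | rfl | omega | (congr <;> omega)

theorem delete_xn {G : Type u} [CommGroup G] (Q : QP G) (r : ℕ) (a : ℕ) :
    (Q.delete r).xn a = if a < Q.m - 1 then Q.xn (liftIdx r a) else 1 := by
  unfold QP.delete QP.xn liftIdx
  dsimp only
  split_ifs <;> first | rfl | omega | (congr <;> omega)

theorem uC_congr (f g : ℕ → ℕ → ℤ) (m i j a b : ℕ) (hi : i < m) (hj : j < m)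
    (h : ∀ u v, u < m → v < m → f u v = g u v) :
    uC f m i j a b = uC g m i j a b := by
  unfold uC
  split_ifs <;> first | rfl | omega |
    ((repeat rw [h _ _ (by omega) (by omega)]))

theorem uX_congr {G : Type u} [CommGroup G] (q : G) (g1 g2 : ℕ → G) (m i j a : ℕ)
    (hi : i < m) (hj : j < m) (h : ∀ u, u < m → g1 u = g2 u) :
    uX q g1 m i j a = uX q g2 m i j a := by
  unfold uX
  split_ifs <;> first | rfl | omega |
    ((repeat rw [h _ (by omega)]))

set_option maxHeartbeats 1000000 in
theorem keyC (f : ℕ → ℕ → ℤ) (M r i' j' a b : ℕ) (hr : r < M)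
    (hi' : i' < M - 1) (hj' : j' < M - 1) (hij' : i' ≠ j') :
    uC (fun u v => f (liftIdx r u) (liftIdx r v)) (M - 1) i' j' a b =
      if a < M ∧ b < M then
        uC f M (liftIdx r i') (liftIdx r j') (liftIdx r a) (liftIdx r b)
      else 0 := by
  have L1 : ∀ u, (liftIdx r u < M) ↔ (u < M - 1) := by
    intro u; unfold liftIdx; split_ifs <;> omega
  have L2 : ∀ u, (liftIdx r u = M) ↔ (u = M - 1) := by
    intro u; unfold liftIdx; split_ifs <;> omega
  have L3 : ∀ u v, (liftIdx r u = liftIdx r v) ↔ (u = v) := by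
    intro u v; unfold liftIdx; split_ifs <;> omega
  unfold uC
  dsimp only
  simp only [L1, L2, L3]
  split_ifs <;> first | rfl | omega | (congr <;> omega)

set_option maxHeartbeats 1000000 in
theorem keyX {G : Type u} [CommGroup G] (q : G) (g : ℕ → G) (M r i' j' a : ℕ) (hr : r < M)
    (hi' : i' < M - 1) (hj' : j' < M - 1) (hij' : i' ≠ j') :
    uX q (fun u => g (liftIdx r u)) (M - 1) i' j' a =
      if a < M then uX q g M (liftIdx r i') (liftIdx r j') (liftIdx r a) else 1 := by
  have L1 : ∀ u, (liftIdx r u < M) ↔ (u < M - 1) := by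
    intro u; unfold liftIdx; split_ifs <;> omega
  have L2 : ∀ u, (liftIdx r u = M) ↔ (u = M - 1) := by
    intro u; unfold liftIdx; split_ifs <;> omega
  unfold uX
  dsimp only
  simp only [L1, L2]
  split_ifs <;> first | rfl | omega | (congr <;> omega)

theorem QP.ext_n {G : Type u} [CommGroup G] {X Y : QP G} (hm : X.m = Y.m)
    (hC : ∀ a b : ℕ, X.Cn a b = Y.Cn a b) (hx : ∀ a : ℕ, X.xn a = Y.xn a) : X = Y := by
  obtain ⟨mX, CX, xX⟩ := X
  obtain ⟨mY, CY, xY⟩ := Y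
  dsimp only at hm
  subst hm
  unfold QP.Cn QP.xn at *
  dsimp only at hC hx
  have hC' : CX = CY := by
    funext a b
    have h := hC a.val b.val
    rw [dif_pos a.isLt, dif_pos b.isLt, dif_pos a.isLt, dif_pos b.isLt] at h
    simpa using h
  have hx' : xX = xY := by
    funext a
    have h := hx a.val
    rw [dif_pos a.isLt, dif_pos a.isLt] at h
    simpa using h
  rw [hC', hx']

theorem lift_dec (r u : ℕ) (hu : u ≠ r) : liftIdx r (decIdx r u) = u := by
  unfold liftIdx decIdx; split_ifs <;> omega

theorem step_delete {G : Type u} [CommGroup G] (q : G) (Q : QP G) (r i j : ℕ)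
    (hr : r < Q.m) (hi : i < Q.m) (hj : j < Q.m) (hij : i ≠ j) (hir : i ≠ r) (hjr : j ≠ r) :
    unlinkStep q (decIdx r i) (decIdx r j) (QP.delete Q r) =
      QP.delete (unlinkStep q i j Q) r := by
  have hdi : decIdx r i < Q.m - 1 := by unfold decIdx; split_ifs <;> omega
  have hdj : decIdx r j < Q.m - 1 := by unfold decIdx; split_ifs <;> omega
  have hdij : decIdx r i ≠ decIdx r j := by unfold decIdx; split_ifs <;> omega
  have hm1 : (Q.delete r).m = Q.m - 1 := rfl
  have hli : liftIdx r (decIdx r i) = i := lift_dec r i hir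
  have hlj : liftIdx r (decIdx r j) = j := lift_dec r j hjr
  apply QP.ext_n
  · rw [unlink_m q (Q.delete r) (hm1 ▸ hdi) (hm1 ▸ hdj) hdij, hm1,
      delete_m (unlinkStep q i j Q) r, unlink_m q Q hi hj hij]
    omega
  · intro a b
    rw [unlink_Cn q (Q.delete r) (hm1 ▸ hdi) (hm1 ▸ hdj) hdij a b, hm1,
      delete_Cn (unlinkStep q i j Q) r a b, unlink_m q Q hi hj hij,
      uC_congr (Q.delete r).Cn (fun u v => Q.Cn (liftIdx r u) (liftIdx r v))
        (Q.m - 1) (decIdx r i) (decIdx r j) a b hdi hdj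
        (fun u v hu hv => by rw [delete_Cn, if_pos ⟨hu, hv⟩]),
      keyC Q.Cn Q.m r (decIdx r i) (decIdx r j) a b hr hdi hdj hdij, hli, hlj]
    have : Q.m + 1 - 1 = Q.m := by omega
    rw [this]
    by_cases h : a < Q.m ∧ b < Q.m
    · rw [if_pos h, if_pos h, unlink_Cn q Q hi hj hij]
    · rw [if_neg h, if_neg h]
  · intro a
    rw [unlink_xn q (Q.delete r) (hm1 ▸ hdi) (hm1 ▸ hdj) hdij a, hm1,
      delete_xn (unlinkStep q i j Q) r a, unlink_m q Q hi hj hij,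
      uX_congr q (Q.delete r).xn (fun u => Q.xn (liftIdx r u))
        (Q.m - 1) (decIdx r i) (decIdx r j) a hdi hdj
        (fun u hu => by rw [delete_xn, if_pos hu]),
      keyX q Q.xn Q.m r (decIdx r i) (decIdx r j) a hr hdi hdj hdij, hli, hlj]
    have : Q.m + 1 - 1 = Q.m := by omega
    rw [this]
    by_cases h : a < Q.m
    · rw [if_pos h, if_pos h, unlink_xn q Q hi hj hij]
    · rw [if_neg h, if_neg h]

theorem main_aux {G : Type u} [CommGroup G] (q : G) (S : List (ℕ × ℕ)) :
    ∀ (Q : QP G) (r : ℕ), r < Q.m →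
      (∀ t : Fin S.length, (S.get t).1 ≠ (S.get t).2 ∧
        (S.get t).1 < Q.m + (t : ℕ) ∧ (S.get t).2 < Q.m + (t : ℕ) ∧
        (S.get t).1 ≠ r ∧ (S.get t).2 ≠ r) →
      applySeq q (S.map fun e => (decIdx r e.1, decIdx r e.2)) (QP.delete Q r) =
        QP.delete (applySeq q S Q) r := by
  induction S with
  | nil => intro Q r _ _; rfl
  | cons e S ih =>
    intro Q r hr h
    have h0 : e.1 ≠ e.2 ∧ e.1 < Q.m + 0 ∧ e.2 < Q.m + 0 ∧ e.1 ≠ r ∧ e.2 ≠ r := by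
      simpa using h ⟨0, by simp⟩
    simp only [List.map_cons, applySeq, List.foldl_cons]
    rw [show unlinkStep q (decIdx r e.1, decIdx r e.2).1 (decIdx r e.2) (Q.delete r) =
          QP.delete (unlinkStep q e.1 e.2 Q) r from
        step_delete q Q r e.1 e.2 hr (by have := h0.2.1; omega) (by have := h0.2.2.1; omega)
          h0.1 h0.2.2.2.1 h0.2.2.2.2]
    exact ih (unlinkStep q e.1 e.2 Q) r
      (by rw [unlink_m q Q (by have := h0.2.1; omega) (by have := h0.2.2.1; omega) h0.1]; omega)
      (by
        intro t
        have ht : (S.get t).1 ≠ (S.get t).2 ∧ (S.get t).1 < Q.m + ((t : ℕ) + 1) ∧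
            (S.get t).2 < Q.m + ((t : ℕ) + 1) ∧ (S.get t).1 ≠ r ∧ (S.get t).2 ≠ r := by
          simpa using h ⟨t.val + 1, by simpa using Nat.succ_lt_succ t.isLt⟩
        rw [unlink_m q Q (by have := h0.2.1; omega) (by have := h0.2.2.1; omega) h0.1]
        exact ⟨ht.1, by have := ht.2.1; omega, by have := ht.2.2.1; omega,
          ht.2.2.2.1, ht.2.2.2.2⟩)

/-- **Deleting an untouched node commutes with unlinking** (content of Lemma 6.2).
If a sequence of unlinkings `S` starting at `m` nodes never unlinks the node `r`, then applying
the re-indexed sequence `S̃` (every index greater than `r` decreased by one) to the quiver pair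
with node `r` deleted yields exactly the quiver pair obtained by deleting node `r` from the
result of applying `S`. -/
theorem delete_commutes_with_unlinking {G : Type u} [CommGroup G] (q : G) {m : ℕ}
    (C : Fin m → Fin m → ℤ) (hC : ∀ a b, C a b = C b a) (x : Fin m → G)
    (r : ℕ) (hr : r < m) (S : List (ℕ × ℕ)) (hS : ValidSeq m S)
    (hSr : ∀ t : Fin S.length, (S.get t).1 ≠ r ∧ (S.get t).2 ≠ r) :
    applySeq q (S.map fun e => (decIdx r e.1, decIdx r e.2)) (QP.delete ⟨m, C, x⟩ r) =
      QP.delete (applySeq q S ⟨m, C, x⟩) r := by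
  exact main_aux q S ⟨m, C, x⟩ r hr
    (fun t => ⟨(hS t).1, (hS t).2.1, (hS t).2.2, (hSr t).1, (hSr t).2⟩)

end QuiverUnlink
end
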